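/- arXiv:1712.08507 — 3 statements merged into one kernel-verified Lean document; each statement's English description precedes it below -/
import Mathlib

section
/- Let P₀ and P₁ be probability distributions on a finite set Σ with the same support, and suppose there exist ε, δ with 0 < ε < δ such that: (i) ∑_{m} |P₁(m) - P₀(m)| ≤ ε, and (ii) for every m with P₁(m) ≠ P₀(m), both P₀(m) ≥ δ and P₁(m) ≥ δ. Then the Kullback–Leibler divergence satisfies KL(P₀, P₁) ≤ (1/ln 2) · (1/2 + δ²ε/(3(δ-ε)³)) · ε²/δ, where KL is computed with base-2 logarithms. -/
/-!
The function `F x = log x + (1 - x) + (1 - x)² / 2 + (1 - x)³ / (3x)` has derivative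
`(x - 1)³ / (3x²)`, so it is minimal at `x = 1`, where it vanishes. Taking `x = P₁ m / P₀ m` bounds
each summand of the natural-log divergence by
`(P₀ m - P₁ m) + (P₀ m - P₁ m)² / (2 P₀ m) + (P₀ m - P₁ m)³ / (3 P₀ m P₁ m)`. Where the two
distributions differ both masses are at least `δ` and `|P₀ m - P₁ m| ≤ ε`, so the last two terms are
at most `|P₁ m - P₀ m| (ε / (2δ) + ε² / (3δ²))`; the linear terms sum to zero. Hence the divergence
is at most `ε² / (2δ) + ε³ / (3δ²)`, which is below the claimed bound since `(δ - ε)³ ≤ δ³`.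
-/

open Real Set Finset

lemma hasDerivAt_log_add_cubic {x : ℝ} (hx : 0 < x) :
    HasDerivAt (fun y => log y + (1 - y) + (1 - y) ^ 2 / 2 + (1 - y) ^ 3 / (3 * y))
      ((x - 1) ^ 3 / (3 * x ^ 2)) x := by
  have h1 : HasDerivAt (fun y : ℝ => 1 - y) (-1) x := by
    simpa using (hasDerivAt_id x).const_sub 1
  have h3 : HasDerivAt (fun y : ℝ => 3 * y) 3 x := by
    simpa using (hasDerivAt_id x).const_mul 3
  refine ((((hasDerivAt_log hx.ne').add h1).add ((h1.pow 2).div_const 2)).add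
      ((h1.pow 3).div h3 (by positivity))).congr_deriv ?_
  simp only [Pi.pow_apply]
  field_simp
  ring

lemma neg_log_le_third_order {x : ℝ} (hx : 0 < x) :
    -log x ≤ (1 - x) + (1 - x) ^ 2 / 2 + (1 - x) ^ 3 / (3 * x) := by
  set F : ℝ → ℝ := fun y => log y + (1 - y) + (1 - y) ^ 2 / 2 + (1 - y) ^ 3 / (3 * y)
  have hF : DifferentiableOn ℝ F (Ioi 0) := fun y hy =>
    (hasDerivAt_log_add_cubic hy).differentiableAt.differentiableWithinAt
  have hF1 : F 1 = 0 := by simp [F]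
  suffices 0 ≤ F x by simp only [F] at this; linarith
  rcases le_total x 1 with hx1 | hx1
  · have hanti : AntitoneOn F (Ioc 0 1) := by
      refine antitoneOn_of_deriv_nonpos (convex_Ioc 0 1)
        (hF.continuousOn.mono Ioc_subset_Ioi_self)
        (hF.mono (interior_subset.trans Ioc_subset_Ioi_self)) fun y hy => ?_
      rw [interior_Ioc] at hy
      rw [(hasDerivAt_log_add_cubic hy.1).deriv]
      exact div_nonpos_of_nonpos_of_nonneg (Odd.pow_nonpos (by decide) (by linarith [hy.2]))
        (by positivity)
    exact hF1 ▸ hanti ⟨hx, hx1⟩ ⟨zero_lt_one, le_rfl⟩ hx1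
  · have hmono : MonotoneOn F (Ici 1) := by
      refine monotoneOn_of_deriv_nonneg (convex_Ici 1)
        (hF.continuousOn.mono fun y hy => mem_Ioi.mpr (zero_lt_one.trans_le hy))
        (hF.mono (interior_subset.trans fun y hy => mem_Ioi.mpr (zero_lt_one.trans_le hy)))
        fun y hy => ?_
      rw [interior_Ici] at hy
      rw [(hasDerivAt_log_add_cubic (zero_lt_one.trans hy)).deriv]
      have : 0 ≤ y - 1 := by linarith [mem_Ioi.mp hy]
      positivity
    exact hF1 ▸ hmono (mem_Ici.mpr le_rfl) hx1 hx1

lemma mul_log_div_le_cubic {a b : ℝ} (ha : 0 < a) (hb : 0 < b) :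
    a * log (a / b) ≤ (a - b) + (a - b) ^ 2 / (2 * a) + (a - b) ^ 3 / (3 * a * b) := by
  have h := mul_le_mul_of_nonneg_left (neg_log_le_third_order (div_pos hb ha)) ha.le
  rw [← log_inv, inv_div] at h
  refine h.trans_eq ?_
  field_simp

lemma mul_log_div_le_of_abs_sub_le {a b δ ε : ℝ} (hδ : 0 < δ) (ha : δ ≤ a) (hb : δ ≤ b)
    (hab : |b - a| ≤ ε) :
    a * log (a / b) ≤ (a - b) + |b - a| * (ε / (2 * δ) + ε ^ 2 / (3 * δ ^ 2)) := by
  have ha0 : 0 < a := hδ.trans_le ha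
  have hb0 : 0 < b := hδ.trans_le hb
  have hε : 0 ≤ ε := (abs_nonneg _).trans hab
  have hsq : (a - b) ^ 2 / (2 * a) ≤ |b - a| * (ε / (2 * δ)) := by
    rw [← sq_abs, abs_sub_comm, sq, mul_div_assoc]
    gcongr
  have hcube : (a - b) ^ 3 / (3 * a * b) ≤ |b - a| * (ε ^ 2 / (3 * δ ^ 2)) := by
    calc (a - b) ^ 3 / (3 * a * b) ≤ |b - a| ^ 3 / (3 * a * b) := by
          rw [abs_sub_comm, ← abs_pow]
          gcongr
          exact le_abs_self _
      _ ≤ |b - a| * ε ^ 2 / (3 * δ * δ) := by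
          rw [pow_succ', mul_div_assoc, mul_div_assoc]
          gcongr
      _ = |b - a| * (ε ^ 2 / (3 * δ ^ 2)) := by ring
  linarith [mul_log_div_le_cubic ha0 hb0]

lemma sum_mul_log_div_le {A : Type*} [Fintype A] {P Q : A → ℝ} {ε δ : ℝ} (hδ0 : 0 < δ)
    (hsum : ∑ m, P m = ∑ m, Q m) (hl1 : ∑ m, |Q m - P m| ≤ ε)
    (hδ : ∀ m, Q m ≠ P m → δ ≤ P m ∧ δ ≤ Q m) :
    ∑ m, P m * log (P m / Q m) ≤ ε * (ε / (2 * δ) + ε ^ 2 / (3 * δ ^ 2)) := by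
  have hε : 0 ≤ ε := (sum_nonneg fun m _ => abs_nonneg (Q m - P m)).trans hl1
  set C := ε / (2 * δ) + ε ^ 2 / (3 * δ ^ 2)
  have hterm : ∀ m, P m * log (P m / Q m) ≤ (P m - Q m) + |Q m - P m| * C := by
    intro m
    by_cases hm : Q m = P m
    · simp [hm]
    · obtain ⟨hP, hQ⟩ := hδ m hm
      exact mul_log_div_le_of_abs_sub_le hδ0 hP hQ
        ((single_le_sum (fun k _ => abs_nonneg (Q k - P k)) (mem_univ m)).trans hl1)
  calc ∑ m, P m * log (P m / Q m) ≤ ∑ m, ((P m - Q m) + |Q m - P m| * C) :=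
        sum_le_sum fun m _ => hterm m
    _ = (∑ m, |Q m - P m|) * C := by
        rw [sum_add_distrib, sum_sub_distrib, hsum, ← sum_mul]
        ring
    _ ≤ ε * C := by gcongr

theorem stmt6_general {A : Type*} [Fintype A] (P₀ P₁ : A → ℝ) (ε δ : ℝ)
    (hε : 0 < ε) (hεδ : ε < δ)
    (hP₀1 : ∑ m, P₀ m = 1) (hP₁1 : ∑ m, P₁ m = 1)
    (hl1 : ∑ m, |P₁ m - P₀ m| ≤ ε)
    (hδ : ∀ m, P₁ m ≠ P₀ m → δ ≤ P₀ m ∧ δ ≤ P₁ m) :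
    ∑ m, P₀ m * Real.logb 2 (P₀ m / P₁ m)
      ≤ (1 / Real.log 2) * (1 / 2 + δ ^ 2 * ε / (3 * (δ - ε) ^ 3)) * ε ^ 2 / δ := by
  have hδ0 : 0 < δ := hε.trans hεδ
  have hlogb : ∑ m, P₀ m * logb 2 (P₀ m / P₁ m)
      = (1 / log 2) * ∑ m, P₀ m * log (P₀ m / P₁ m) := by
    rw [mul_sum]
    congr! 1 with m
    rw [logb]
    ring
  have hln := sum_mul_log_div_le hδ0 (hP₀1.trans hP₁1.symm) hl1 hδ
  have hcube : ε ^ 3 / (3 * δ ^ 2) ≤ δ * ε ^ 3 / (3 * (δ - ε) ^ 3) := by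
    rw [show ε ^ 3 / (3 * δ ^ 2) = δ * ε ^ 3 / (3 * δ ^ 3) by field_simp]
    have : 0 < δ - ε := sub_pos.mpr hεδ
    gcongr
    linarith
  rw [hlogb, mul_assoc, mul_div_assoc]
  gcongr
  calc _ ≤ ε * (ε / (2 * δ) + ε ^ 2 / (3 * δ ^ 2)) := hln
    _ = ε ^ 2 / (2 * δ) + ε ^ 3 / (3 * δ ^ 2) := by field_simp
    _ ≤ ε ^ 2 / (2 * δ) + δ * ε ^ 3 / (3 * (δ - ε) ^ 3) := by gcongr
    _ = _ := by field_simp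

theorem stmt6 {A : Type*} [Fintype A] (P₀ P₁ : A → ℝ) (ε δ : ℝ)
    (hε : 0 < ε) (hεδ : ε < δ)
    (hP₀0 : ∀ m, 0 ≤ P₀ m) (hP₁0 : ∀ m, 0 ≤ P₁ m)
    (hP₀1 : ∑ m, P₀ m = 1) (hP₁1 : ∑ m, P₁ m = 1)
    (hsupp : ∀ m, P₀ m = 0 ↔ P₁ m = 0)
    (hl1 : ∑ m, |P₁ m - P₀ m| ≤ ε)
    (hδ : ∀ m, P₁ m ≠ P₀ m → δ ≤ P₀ m ∧ δ ≤ P₁ m) :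
    ∑ m, P₀ m * Real.logb 2 (P₀ m / P₁ m)
      ≤ (1 / Real.log 2) * (1 / 2 + δ ^ 2 * ε / (3 * (δ - ε) ^ 3)) * ε ^ 2 / δ :=
  stmt6_general P₀ P₁ ε δ hε hεδ hP₀1 hP₁1 hl1 hδ
end

section
/- Let P₀ and P₁ be probability distributions on a finite set Σ with the same support, let δ > 0, ε > 0 with 10ε < δ, and suppose ∑_m |P₁(m) - P₀(m)| ≤ ε and for every m with P₁(m) ≠ P₀(m), both P₀(m) ≥ δ and P₁(m) ≥ δ. Then KL(P₀, P₁) ≤ 0.79 · ε²/δ, where KL uses base-2 logarithms. -/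
/-!
Each term satisfies `p log (p/q) ≤ (p - q) + (p - q)² / (2δ)` once `p, q ≥ δ`: for `p ≥ q` this is
`log x ≤ sinh (log x) = (x - x⁻¹)/2` at `x = p/q`, and for `p < q` it is
`log (1 + t) ≥ 2t/(t + 2)` at `t = q/p - 1`. Summing, the linear terms cancel because both
distributions have total mass one, and `∑ (p - q)² ≤ (∑ |p - q|)² ≤ ε²`. This gives
`KL ≤ ε² / (2 δ ln 2)`, and `1 / (2 ln 2) < 0.79`.
-/

open Real Finset

lemma Real.log_le_sub_inv_div_two {x : ℝ} (hx : 1 ≤ x) : log x ≤ (x - x⁻¹) / 2 := by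
  rw [← sinh_log (by linarith)]
  exact self_le_sinh_iff.2 (log_nonneg hx)

lemma Real.mul_log_div_le_of_le {p q : ℝ} (hq : 0 < q) (hqp : q ≤ p) :
    p * log (p / q) ≤ (p - q) + (p - q) ^ 2 / (2 * q) := calc
  p * log (p / q) ≤ p * ((p / q - (p / q)⁻¹) / 2) :=
    mul_le_mul_of_nonneg_left (log_le_sub_inv_div_two ((one_le_div hq).2 hqp)) (hq.le.trans hqp)
  _ = (p - q) + (p - q) ^ 2 / (2 * q) := by
    have hp : p ≠ 0 := (hq.trans_le hqp).ne'
    field_simp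
    ring

lemma Real.mul_log_div_le_of_ge {p q : ℝ} (hp : 0 < p) (hpq : p ≤ q) :
    p * log (p / q) ≤ (p - q) + (p - q) ^ 2 / (p + q) := by
  have hlog : 2 * (q - p) / (p + q) ≤ log (q / p) := by
    convert le_log_one_add_of_nonneg (sub_nonneg.2 ((one_le_div hp).2 hpq)) using 1
    · field_simp
      ring
    · rw [add_sub_cancel]
  calc p * log (p / q) = -(p * log (q / p)) := by rw [← inv_div q p, log_inv, mul_neg]
    _ ≤ -(p * (2 * (q - p) / (p + q))) := by gcongr
    _ = (p - q) + (p - q) ^ 2 / (p + q) := by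
      have : p + q ≠ 0 := by linarith
      field_simp
      ring

lemma Real.mul_log_div_le_sub_add_sq_div {p q δ : ℝ} (hδ : 0 < δ) (hp : δ ≤ p) (hq : δ ≤ q) :
    p * log (p / q) ≤ (p - q) + (p - q) ^ 2 / (2 * δ) := by
  rcases le_total q p with hqp | hpq
  · refine (mul_log_div_le_of_le (hδ.trans_le hq) hqp).trans ?_
    gcongr
  · refine (mul_log_div_le_of_ge (hδ.trans_le hp) hpq).trans ?_
    gcongr
    linarith

lemma sum_sq_sub_le_sq_sum_abs_sub {ι : Type*} (s : Finset ι) (f g : ι → ℝ) :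
    ∑ i ∈ s, (f i - g i) ^ 2 ≤ (∑ i ∈ s, |f i - g i|) ^ 2 := by
  simpa only [sq_abs] using sum_sq_le_sq_sum_of_nonneg (s := s) (fun i _ ↦ abs_nonneg (f i - g i))

lemma sum_mul_log_div_le_sq_sum_abs_sub_div {ι : Type*} (s : Finset ι) (P₀ P₁ : ι → ℝ) {δ : ℝ}
    (hδ0 : 0 < δ) (hsum : ∑ i ∈ s, P₀ i = ∑ i ∈ s, P₁ i)
    (hδ : ∀ i ∈ s, P₁ i ≠ P₀ i → δ ≤ P₀ i ∧ δ ≤ P₁ i) :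
    ∑ i ∈ s, P₀ i * log (P₀ i / P₁ i) ≤ (∑ i ∈ s, |P₀ i - P₁ i|) ^ 2 / (2 * δ) := by
  have hterm : ∀ i ∈ s,
      P₀ i * log (P₀ i / P₁ i) ≤ (P₀ i - P₁ i) + (P₀ i - P₁ i) ^ 2 / (2 * δ) := by
    intro i hi
    by_cases heq : P₁ i = P₀ i
    · simp [heq]
    · obtain ⟨h₀, h₁⟩ := hδ i hi heq
      exact mul_log_div_le_sub_add_sq_div hδ0 h₀ h₁
  calc ∑ i ∈ s, P₀ i * log (P₀ i / P₁ i)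
      ≤ ∑ i ∈ s, ((P₀ i - P₁ i) + (P₀ i - P₁ i) ^ 2 / (2 * δ)) := sum_le_sum hterm
    _ = (∑ i ∈ s, (P₀ i - P₁ i) ^ 2) / (2 * δ) := by
      rw [sum_add_distrib, sum_sub_distrib, hsum, sub_self, zero_add, sum_div]
    _ ≤ (∑ i ∈ s, |P₀ i - P₁ i|) ^ 2 / (2 * δ) := by
      gcongr
      exact sum_sq_sub_le_sq_sum_abs_sub s P₀ P₁

lemma Real.inv_two_mul_log_two_lt : (2 * log 2)⁻¹ < 0.79 := by
  rw [inv_lt_comm₀ (by positivity) (by norm_num)]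
  linarith [log_two_gt_d9]

theorem stmt7_general {A : Type*} [Fintype A] (P₀ P₁ : A → ℝ) (ε δ : ℝ)
    (hδ0 : 0 < δ)
    (hP₀1 : ∑ m, P₀ m = 1) (hP₁1 : ∑ m, P₁ m = 1)
    (hl1 : ∑ m, |P₁ m - P₀ m| ≤ ε)
    (hδ : ∀ m, P₁ m ≠ P₀ m → δ ≤ P₀ m ∧ δ ≤ P₁ m) :
    ∑ m, P₀ m * Real.logb 2 (P₀ m / P₁ m) ≤ 0.79 * ε ^ 2 / δ := by
  have hKL : ∑ m, P₀ m * log (P₀ m / P₁ m) ≤ ε ^ 2 / (2 * δ) := by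
    refine (sum_mul_log_div_le_sq_sum_abs_sub_div univ P₀ P₁ hδ0 (hP₀1.trans hP₁1.symm)
      fun m _ ↦ hδ m).trans ?_
    simp_rw [abs_sub_comm (P₀ _)]
    gcongr
  have hlog2 : 0 < log 2 := log_pos one_lt_two
  calc ∑ m, P₀ m * logb 2 (P₀ m / P₁ m) = (∑ m, P₀ m * log (P₀ m / P₁ m)) / log 2 := by
        simp only [← log_div_log, sum_div, mul_div_assoc]
    _ ≤ ε ^ 2 / (2 * δ) / log 2 := by gcongr
    _ = (2 * log 2)⁻¹ * ε ^ 2 / δ := by field_simp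
    _ ≤ 0.79 * ε ^ 2 / δ := by gcongr; exact inv_two_mul_log_two_lt.le

theorem stmt7 {A : Type*} [Fintype A] (P₀ P₁ : A → ℝ) (ε δ : ℝ)
    (hε : 0 < ε) (hδ0 : 0 < δ) (hεδ : 10 * ε < δ)
    (hP₀0 : ∀ m, 0 ≤ P₀ m) (hP₁0 : ∀ m, 0 ≤ P₁ m)
    (hP₀1 : ∑ m, P₀ m = 1) (hP₁1 : ∑ m, P₁ m = 1)
    (hsupp : ∀ m, P₀ m = 0 ↔ P₁ m = 0)
    (hl1 : ∑ m, |P₁ m - P₀ m| ≤ ε)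
    (hδ : ∀ m, P₁ m ≠ P₀ m → δ ≤ P₀ m ∧ δ ≤ P₁ m) :
    ∑ m, P₀ m * Real.logb 2 (P₀ m / P₁ m) ≤ 0.79 * ε ^ 2 / δ :=
  stmt7_general P₀ P₁ ε δ hδ0 hP₀1 hP₁1 hl1 hδ
end

section
/- Consider an adaptive observation process over a finite alphabet Σ where, for each time t and history x^{(<t)}, the conditional laws P₀(·|x^{(<t)}) and P₁(·|x^{(<t)}) satisfy ∑_m |P₁(m|x^{(<t)}) - P₀(m|x^{(<t)})| ≤ ε and P_η(m|x^{(<t)}) ≥ δ whenever the two conditional probabilities of m differ (η ∈ {0,1}), with 10ε < δ. Then for any T, KL(P₀^{≤T}, P₁^{≤T}) ≤ T · 0.79 · ε²/δ. -/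
/-!
The KL divergence satisfies the chain rule, so the divergence of the joint laws of `T`
observations is the sum over the `T` steps of the expected divergence between the two
conditional laws. Each conditional divergence is at most `c · χ²` as soon as
`klFun x = x log x + 1 - x ≤ c (x - 1)²` on the range of the likelihood ratios; since
`10 ε < δ` these ratios lie above `9/10`, where `c = 10/19` works. Finally
`χ² ≤ (∑ |p - r|)² / δ ≤ ε² / δ`, and `(10/19) / log 2 < 0.79`.
-/

/-- Joint law of the first `T` observations of an adaptive process whose
conditional law of the next observation given history `h` under type `η` is `q η h`. -/
def jointLaw {A : Type*} (q : Bool → List A → A → ℝ) (T : ℕ)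
    (η : Bool) (x : Fin T → A) : ℝ :=
  ∏ t : Fin T, q η ((List.ofFn x).take t.val) (x t)

open Real InformationTheory

lemma klFun_le_mul_sq {x c : ℝ} (hx : 0 < x) (hc : 1 / 2 ≤ c) (hcx : 1 ≤ c * (x + 1)) :
    klFun x ≤ c * (x - 1) ^ 2 := by
  rw [klFun_apply]
  rcases le_total 1 x with h1 | h1
  · have hlog : log x ≤ (x - x⁻¹) / 2 := sinh_log hx ▸ self_le_sinh_iff.mpr (log_nonneg h1)
    calc x * log x + 1 - x ≤ x * ((x - x⁻¹) / 2) + 1 - x := by gcongr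
      _ = (x - 1) ^ 2 / 2 := by field_simp; ring
      _ ≤ c * (x - 1) ^ 2 := by nlinarith [sq_nonneg (x - 1)]
  · have hlog : log x ≤ 2 * (x - 1) / (x + 1) := by
      have h := le_log_one_add_of_nonneg (x := x⁻¹ - 1) (sub_nonneg.mpr ((one_le_inv₀ hx).mpr h1))
      rw [add_sub_cancel, log_inv] at h
      have e : 2 * (x⁻¹ - 1) / (x⁻¹ - 1 + 2) = -(2 * (x - 1) / (x + 1)) := by
        field_simp; ring
      linarith
    calc x * log x + 1 - x ≤ x * (2 * (x - 1) / (x + 1)) + 1 - x := by gcongr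
      _ = (x - 1) ^ 2 / (x + 1) := by field_simp; ring
      _ ≤ c * (x - 1) ^ 2 := by
        rw [div_le_iff₀ (by linarith)]
        nlinarith [sq_nonneg (x - 1)]

section Divergence

variable {α : Type*} [Fintype α]

noncomputable def klDivBits (p r : α → ℝ) : ℝ := ∑ a, p a * logb 2 (p a / r a)

lemma sum_mul_log_div_eq_sum_mul_klFun {p r : α → ℝ} (hr : ∀ a, 0 < r a)
    (hpr : ∑ a, p a = ∑ a, r a) :
    ∑ a, p a * log (p a / r a) = ∑ a, r a * klFun (p a / r a) := by
  have hterm : ∀ a, r a * klFun (p a / r a) = p a * log (p a / r a) + (r a - p a) := by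
    intro a
    have := (hr a).ne'
    rw [klFun_apply]
    field_simp
    ring
  rw [Finset.sum_congr rfl fun a _ => hterm a, Finset.sum_add_distrib, Finset.sum_sub_distrib,
    hpr, sub_self, add_zero]

lemma sum_mul_log_div_le_mul_sum_sq_div {p r : α → ℝ} {c : ℝ} (hp : ∀ a, 0 < p a)
    (hr : ∀ a, 0 < r a) (hpr : ∑ a, p a = ∑ a, r a) (hc : 1 / 2 ≤ c)
    (hratio : ∀ a, 1 ≤ c * (p a / r a + 1)) :
    ∑ a, p a * log (p a / r a) ≤ c * ∑ a, (p a - r a) ^ 2 / r a := by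
  rw [sum_mul_log_div_eq_sum_mul_klFun hr hpr, Finset.mul_sum]
  refine Finset.sum_le_sum fun a _ => ?_
  calc r a * klFun (p a / r a) ≤ r a * (c * (p a / r a - 1) ^ 2) :=
        mul_le_mul_of_nonneg_left
          (klFun_le_mul_sq (div_pos (hp a) (hr a)) hc (hratio a)) (hr a).le
    _ = c * ((p a - r a) ^ 2 / r a) := by
        have := (hr a).ne'
        field_simp

lemma sum_sq_div_le_sq_div {p r : α → ℝ} {ε δ : ℝ} (hδ : 0 < δ)
    (hl1 : ∑ a, |r a - p a| ≤ ε) (hδr : ∀ a, r a ≠ p a → δ ≤ r a) :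
    ∑ a, (p a - r a) ^ 2 / r a ≤ ε ^ 2 / δ := by
  have hterm : ∀ a, (p a - r a) ^ 2 / r a ≤ |r a - p a| ^ 2 / δ := by
    intro a
    rw [sq_abs, ← neg_sub, neg_sq]
    by_cases h : r a = p a
    · simp [h]
    · exact div_le_div_of_nonneg_left (sq_nonneg _) hδ (hδr a h)
  calc ∑ a, (p a - r a) ^ 2 / r a ≤ ∑ a, |r a - p a| ^ 2 / δ :=
        Finset.sum_le_sum fun a _ => hterm a
    _ ≤ (∑ a, |r a - p a|) ^ 2 / δ := by
        rw [← Finset.sum_div]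
        gcongr
        exact Finset.sum_sq_le_sq_sum_of_nonneg fun a _ => abs_nonneg _
    _ ≤ ε ^ 2 / δ := by gcongr

lemma klDivBits_le {p r : α → ℝ} {ε δ : ℝ} (hδ : 0 < δ) (hεδ : 10 * ε < δ)
    (hp : ∀ a, 0 < p a) (hr : ∀ a, 0 < r a) (hpr : ∑ a, p a = ∑ a, r a)
    (hl1 : ∑ a, |r a - p a| ≤ ε) (hδr : ∀ a, r a ≠ p a → δ ≤ r a) :
    klDivBits p r ≤ 0.79 * ε ^ 2 / δ := by
  have hratio : ∀ a, 1 ≤ 10 / 19 * (p a / r a + 1) := by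
    intro a
    by_cases h : r a = p a
    · rw [h, div_self (hp a).ne']
      norm_num
    · have hdiff : r a - p a ≤ ε :=
        (le_abs_self _).trans <| (Finset.single_le_sum (fun b _ => abs_nonneg (r b - p b))
          (Finset.mem_univ a)).trans hl1
      have : 9 / 10 ≤ p a / r a := by
        rw [le_div_iff₀ (hr a)]
        linarith [hδr a h]
      linarith
  have hnat : ∑ a, p a * log (p a / r a) ≤ 10 / 19 * (ε ^ 2 / δ) :=
    (sum_mul_log_div_le_mul_sum_sq_div hp hr hpr (by norm_num) hratio).trans
      (mul_le_mul_of_nonneg_left (sum_sq_div_le_sq_div hδ hl1 hδr) (by norm_num))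
  have hlog2 := log_two_gt_d9
  have hbits : klDivBits p r = (∑ a, p a * log (p a / r a)) / log 2 := by
    simp only [klDivBits, logb, Finset.sum_div, mul_div_assoc]
  rw [hbits, div_le_iff₀ (by linarith), mul_div_assoc]
  nlinarith [div_nonneg (sq_nonneg ε) hδ.le]

lemma klDivBits_comp_equiv {β : Type*} [Fintype β] (e : β ≃ α) (p r : α → ℝ) :
    klDivBits (p ∘ e) (r ∘ e) = klDivBits p r :=
  e.sum_comp fun a => p a * logb 2 (p a / r a)

lemma klDivBits_chain {β : Type*} [Fintype β] {P₀ P₁ : β → ℝ} {K₀ K₁ : β → α → ℝ}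
    (hP₀ : ∀ b, P₀ b ≠ 0) (hP₁ : ∀ b, P₁ b ≠ 0) (hK₀ : ∀ b a, K₀ b a ≠ 0)
    (hK₁ : ∀ b a, K₁ b a ≠ 0) (hK₀sum : ∀ b, ∑ a, K₀ b a = 1) :
    klDivBits (fun x : β × α => P₀ x.1 * K₀ x.1 x.2) (fun x => P₁ x.1 * K₁ x.1 x.2)
      = klDivBits P₀ P₁ + ∑ b, P₀ b * klDivBits (K₀ b) (K₁ b) := by
  have hterm : ∀ b a, P₀ b * K₀ b a * logb 2 (P₀ b * K₀ b a / (P₁ b * K₁ b a))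
      = P₀ b * logb 2 (P₀ b / P₁ b) * K₀ b a + P₀ b * (K₀ b a * logb 2 (K₀ b a / K₁ b a)) := by
    intro b a
    rw [mul_div_mul_comm, logb_mul (div_ne_zero (hP₀ b) (hP₁ b)) (div_ne_zero (hK₀ b a) (hK₁ b a))]
    ring
  simp only [klDivBits, Fintype.sum_prod_type, hterm, Finset.sum_add_distrib, ← Finset.mul_sum,
    hK₀sum, mul_one]

end Divergence

section JointLaw

variable {A : Type*}

lemma List.ofFn_snoc {T : ℕ} (y : Fin T → A) (a : A) :
    List.ofFn (Fin.snoc y a : Fin (T + 1) → A) = List.ofFn y ++ [a] := by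
  rw [List.ofFn_succ']
  simp [List.concat_eq_append]

lemma jointLaw_snoc (q : Bool → List A → A → ℝ) {T : ℕ} (η : Bool) (y : Fin T → A) (a : A) :
    jointLaw q (T + 1) η (Fin.snoc y a) = jointLaw q T η y * q η (List.ofFn y) a := by
  unfold jointLaw
  rw [Fin.prod_univ_castSucc]
  congr 1
  · refine Finset.prod_congr rfl fun t _ => ?_
    rw [Fin.snoc_castSucc, List.ofFn_snoc, Fin.val_castSucc,
      List.take_append_of_le_length (by simp [t.isLt.le])]
  · rw [Fin.snoc_last, List.ofFn_snoc, Fin.val_last, List.take_left' (List.length_ofFn)]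

lemma jointLaw_comp_snocEquiv (q : Bool → List A → A → ℝ) (T : ℕ) (η : Bool) :
    jointLaw q (T + 1) η ∘ ((Equiv.prodComm _ _).trans (Fin.snocEquiv fun _ => A))
      = fun x : (Fin T → A) × A => jointLaw q T η x.1 * q η (List.ofFn x.1) x.2 :=
  funext fun x => jointLaw_snoc q η x.1 x.2

lemma jointLaw_pos {η : Bool} {q : Bool → List A → A → ℝ} (hq : ∀ h m, 0 < q η h m) (T : ℕ)
    (x : Fin T → A) : 0 < jointLaw q T η x :=
  Finset.prod_pos fun _ _ => hq _ _

variable [Fintype A]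

lemma sum_jointLaw {q : Bool → List A → A → ℝ} {η : Bool} (hsum : ∀ h, ∑ m, q η h m = 1)
    (T : ℕ) : ∑ x, jointLaw q T η x = 1 := by
  induction T with
  | zero => simp [jointLaw]
  | succ T ih =>
    rw [← ((Equiv.prodComm _ _).trans (Fin.snocEquiv fun _ => A)).sum_comp, ← Function.comp_def,
      jointLaw_comp_snocEquiv, Fintype.sum_prod_type]
    simp only [← Finset.mul_sum, hsum, mul_one, ih]

lemma klDivBits_jointLaw_succ {q : Bool → List A → A → ℝ} (hq : ∀ η h m, 0 < q η h m)
    (hsum : ∀ h, ∑ m, q false h m = 1) (T : ℕ) :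
    klDivBits (jointLaw q (T + 1) false) (jointLaw q (T + 1) true)
      = klDivBits (jointLaw q T false) (jointLaw q T true)
        + ∑ y, jointLaw q T false y * klDivBits (q false (List.ofFn y)) (q true (List.ofFn y)) := by
  rw [← klDivBits_comp_equiv ((Equiv.prodComm _ _).trans (Fin.snocEquiv fun _ => A)),
    jointLaw_comp_snocEquiv, jointLaw_comp_snocEquiv]
  exact klDivBits_chain (fun y => (jointLaw_pos (hq false) T y).ne')
    (fun y => (jointLaw_pos (hq true) T y).ne') (fun y a => (hq false (List.ofFn y) a).ne')
    (fun y a => (hq true (List.ofFn y) a).ne') fun _ => hsum _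

end JointLaw

theorem stmt11_general {A : Type*} [Fintype A] (q : Bool → List A → A → ℝ) (T : ℕ)
    (ε δ : ℝ) (hδ : 0 < δ) (hεδ : 10 * ε < δ)
    (hsum : ∀ η h, ∑ m, q η h m = 1)
    (hpos : ∀ η h m, 0 < q η h m)
    (hl1 : ∀ h : List A, ∑ m, |q true h m - q false h m| ≤ ε)
    (hδlow : ∀ (h : List A) m, q true h m ≠ q false h m →
      δ ≤ q false h m ∧ δ ≤ q true h m) :
    ∑ x : Fin T → A,
        jointLaw q T false x *
          Real.logb 2 (jointLaw q T false x / jointLaw q T true x)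
      ≤ T * (0.79 * ε ^ 2 / δ) := by
  change klDivBits (jointLaw q T false) (jointLaw q T true) ≤ T * (0.79 * ε ^ 2 / δ)
  have hstep : ∀ h, klDivBits (q false h) (q true h) ≤ 0.79 * ε ^ 2 / δ := fun h =>
    klDivBits_le hδ hεδ (hpos false h) (hpos true h) ((hsum false h).trans (hsum true h).symm)
      (hl1 h) fun m hm => (hδlow h m hm).2
  induction T with
  | zero => simp [klDivBits, jointLaw]
  | succ T ih =>
    rw [klDivBits_jointLaw_succ hpos (hsum false), Nat.cast_succ]
    have hexp : ∑ y, jointLaw q T false y * klDivBits (q false (List.ofFn y)) (q true (List.ofFn y))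
        ≤ 0.79 * ε ^ 2 / δ :=
      calc _ ≤ ∑ y, jointLaw q T false y * (0.79 * ε ^ 2 / δ) :=
            Finset.sum_le_sum fun y _ => mul_le_mul_of_nonneg_left (hstep _)
              (jointLaw_pos (hpos false) T y).le
        _ = 0.79 * ε ^ 2 / δ := by rw [← Finset.sum_mul, sum_jointLaw (hsum false), one_mul]
    linarith

/-- Under the ACDT(ε,δ) assumptions with 10ε < δ, the base-2 KL divergence between
the joint laws of the first `T` observations is at most `T · 0.79 · ε²/δ`. -/
theorem stmt11 {A : Type*} [Fintype A] (q : Bool → List A → A → ℝ) (T : ℕ)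
    (ε δ : ℝ) (hε : 0 < ε) (hδ : 0 < δ) (hεδ : 10 * ε < δ)
    (hsum : ∀ η h, ∑ m, q η h m = 1)
    (hpos : ∀ η h m, 0 < q η h m)
    (hl1 : ∀ h : List A, ∑ m, |q true h m - q false h m| ≤ ε)
    (hδlow : ∀ (h : List A) m, q true h m ≠ q false h m →
      δ ≤ q false h m ∧ δ ≤ q true h m) :
    ∑ x : Fin T → A,
        jointLaw q T false x *
          Real.logb 2 (jointLaw q T false x / jointLaw q T true x)
      ≤ T * (0.79 * ε ^ 2 / δ) :=
  stmt11_general q T ε δ hδ hεδ hsum hpos hl1 hδlow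
end
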